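/- (Covariance of unique-reach indicators.) In the uniform group-request model, let R_i = min(X_i, 1). For two distinct users i and i′ let G_∩ = G_i ∩ G_{i′} and G_∪ = G_i ∪ G_{i′}. Then Cov[R_i, R_{i′}] = ( (1 − 2/k)^{∑_{j ∈ G_∩} n_j} − (1 − 1/k)^{2 ∑_{j ∈ G_∩} n_j} ) · (1 − 1/k)^{∑_{j ∈ G_∪ \ G_∩} n_j}. -/

import Mathlib

open MeasureTheory Finset

noncomputable section

/-- The p.m.f. of the Binomial(n, p) distribution, `f(x; n, p)`,
extended by `0` for `x > n` (since `n.choose x = 0` there). -/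
def binPMF (x n : ℕ) (p : ℝ) : ℝ := (n.choose x : ℝ) * p ^ x * (1 - p) ^ (n - x)

/-- The c.d.f. of the Binomial(n, p) distribution, `F(x; n, p) = ∑_{l=0}^x f(l; n, p)`. -/
def binCDF (x n : ℕ) (p : ℝ) : ℝ := ∑ l ∈ Finset.range (x + 1), binPMF l n p

/-- `X_i(ω)`: the number of requests generated by user `i` in the trajectory `ω`,
where `ω t` is the user generating request `t`. -/
def reqCount {T : ℕ} (i : ℕ) (ω : Fin T → ℕ) : ℕ :=
  (Finset.univ.filter fun t => ω t = i).card

/-- `n_j`: the number of requests originating from group `j`, where `gidx t` is the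
index of the group generating request `t`. -/
def nreq {M T : ℕ} (gidx : Fin T → Fin M) (j : Fin M) : ℕ :=
  (Finset.univ.filter fun t => gidx t = j).card

/-- `G_i`: the set of indices of groups containing user `i`. -/
def Gset {M : ℕ} (Grp : Fin M → Finset ℕ) (i : ℕ) : Finset (Fin M) :=
  Finset.univ.filter fun j => i ∈ Grp j

/-- `∑_{j ∈ G_i} n_j`: the total number of requests from groups containing user `i`. -/
def totImp {M T : ℕ} (Grp : Fin M → Finset ℕ) (gidx : Fin T → Fin M) (i : ℕ) : ℕ :=
  ∑ j ∈ Gset Grp i, nreq gidx j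

/-- The uniform group-request model: each of the `T` requests is independently generated
by a user chosen uniformly at random from the group it originates from, each group being
a finite set of users of cardinality `k`.  This is the product of the uniform measures
on the groups `Grp (gidx t)`, a probability measure on trajectories `ω : Fin T → ℕ`. -/
def reqMeasure {M T k : ℕ} (hk : 0 < k) (Grp : Fin M → Finset ℕ)
    (hcard : ∀ j, (Grp j).card = k) (gidx : Fin T → Fin M) : Measure (Fin T → ℕ) :=
  Measure.pi fun t => (PMF.uniformOfFinset (Grp (gidx t))
    (Finset.card_pos.mp (by rw [hcard (gidx t)]; exact hk))).toMeasure

/-- `R_i(ω) = min(X_i(ω), 1)`: the indicator that user `i` is reached at least once. -/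
def reachInd {T : ℕ} (i : ℕ) (ω : Fin T → ℕ) : ℝ := ((min (reqCount i ω) 1 : ℕ) : ℝ)

/-!
User `i` is reached unless the event `E_i` that no request comes from `i` occurs, so
`R_i = 1 - 1_{E_i}` and `Cov[R_i, R_{i'}] = P(E_i ∩ E_{i'}) - P(E_i) P(E_{i'})`.
Such events are boxes for the product measure: a request from group `j` avoids a set `A` of
users with probability `1 - |G_j ∩ A| / k`, whence `P(E_i) = (1 - 1/k)^{∑_{G_i} n_j}` and
`P(E_i ∩ E_{i'}) = (1 - 2/k)^{∑_{G_∩} n_j} (1 - 1/k)^{∑_{G_∪ \ G_∩} n_j}`.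
The formula follows from `∑_{G_i} + ∑_{G_{i'}} = 2 ∑_{G_∩} + ∑_{G_∪ \ G_∩}`.
-/

lemma integral_indicator_compl_mul_sub_mul {Ω : Type*} [MeasurableSpace Ω] (μ : Measure Ω)
    [IsProbabilityMeasure μ] {A B : Set Ω} (hA : MeasurableSet A) (hB : MeasurableSet B) :
    ∫ ω, Aᶜ.indicator (1 : Ω → ℝ) ω * Bᶜ.indicator (1 : Ω → ℝ) ω ∂μ
        - (∫ ω, Aᶜ.indicator (1 : Ω → ℝ) ω ∂μ) * ∫ ω, Bᶜ.indicator (1 : Ω → ℝ) ω ∂μ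
      = μ.real (A ∩ B) - μ.real A * μ.real B := by
  have h := measureReal_union_add_inter (μ := μ) (s := A) hB
  simp_rw [← Pi.mul_apply (Aᶜ.indicator (1 : Ω → ℝ)), ← Set.inter_indicator_one,
    integral_indicator_one hA.compl, integral_indicator_one hB.compl,
    integral_indicator_one (hA.compl.inter hB.compl),
    ← Set.compl_union, probReal_compl_eq_one_sub hA, probReal_compl_eq_one_sub hB,
    probReal_compl_eq_one_sub (hA.union hB)]
  linear_combination -h

lemma PMF.measureReal_uniformOfFinset_compl {α : Type*} [MeasurableSpace α]
    [MeasurableSingletonClass α] [DecidableEq α] (s A : Finset α) (hs : s.Nonempty) :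
    (PMF.uniformOfFinset s hs).toMeasure.real (↑A)ᶜ = 1 - #(s ∩ A) / #s := by
  rw [probReal_compl_eq_one_sub A.measurableSet, measureReal_def,
    PMF.toMeasure_uniformOfFinset_apply hs A A.measurableSet, ENNReal.toReal_div]
  simp [Finset.filter_mem_eq_inter]

lemma Finset.prod_pow_eq_pow_sum_of_eqOn {ι M : Type*} [Fintype ι] [CommMonoid M]
    {G : Finset ι} {f : ι → M} {x : M} (n : ι → ℕ) (hin : ∀ j ∈ G, f j = x)
    (hout : ∀ j ∉ G, f j = 1) :
    ∏ j, f j ^ n j = x ^ ∑ j ∈ G, n j := by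
  rw [← prod_subset (subset_univ G) fun j _ hj => by rw [hout j hj, one_pow],
    ← prod_pow_eq_pow_sum]
  exact prod_congr rfl fun j hj => by rw [hin j hj]

lemma Finset.prod_pow_eq_pow_sum_mul_pow_sum {ι M : Type*} [Fintype ι] [DecidableEq ι]
    [CommMonoid M] {S U : Finset ι} {f : ι → M} {x y : M} (n : ι → ℕ) (hSU : S ⊆ U)
    (hS : ∀ j ∈ S, f j = y) (hUS : ∀ j ∈ U \ S, f j = x) (hout : ∀ j ∉ U, f j = 1) :
    ∏ j, f j ^ n j = y ^ (∑ j ∈ S, n j) * x ^ ∑ j ∈ U \ S, n j := by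
  rw [← prod_subset (subset_univ U) fun j _ hj => by rw [hout j hj, one_pow],
    ← prod_sdiff hSU, mul_comm, ← prod_pow_eq_pow_sum, ← prod_pow_eq_pow_sum]
  exact congrArg₂ _ (prod_congr rfl fun j hj => by rw [hS j hj])
    (prod_congr rfl fun j hj => by rw [hUS j hj])

lemma Finset.card_inter_pair {α : Type*} [DecidableEq α] {a b : α} (hab : a ≠ b)
    (s : Finset α) :
    #(s ∩ {a, b}) = (if a ∈ s then 1 else 0) + (if b ∈ s then 1 else 0) := by
  calc #(s ∩ {a, b}) = #(({a, b} : Finset α).filter (· ∈ s)) := by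
        rw [inter_comm, filter_mem_eq_inter]
    _ = ∑ c ∈ {a, b}, if c ∈ s then 1 else 0 := card_filter _ _
    _ = _ := sum_pair hab

def unreachedSet (T : ℕ) (A : Finset ℕ) : Set (Fin T → ℕ) := Set.univ.pi fun _ => (↑A)ᶜ

lemma measurableSet_unreachedSet (T : ℕ) (A : Finset ℕ) : MeasurableSet (unreachedSet T A) :=
  MeasurableSet.univ_pi fun _ => A.measurableSet.compl

lemma unreachedSet_inter (T : ℕ) (A B : Finset ℕ) :
    unreachedSet T A ∩ unreachedSet T B = unreachedSet T (A ∪ B) := by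
  rw [unreachedSet, unreachedSet, ← Set.pi_inter_distrib, unreachedSet, coe_union,
    Set.compl_union]

@[simp]
lemma mem_unreachedSet {T : ℕ} {A : Finset ℕ} {ω : Fin T → ℕ} :
    ω ∈ unreachedSet T A ↔ ∀ t, ω t ∉ A := by
  simp [unreachedSet]

lemma reachInd_eq_indicator {T : ℕ} (i : ℕ) :
    reachInd i = (unreachedSet T {i})ᶜ.indicator (1 : (Fin T → ℕ) → ℝ) := by
  funext ω
  by_cases h : ∃ t, ω t = i
  · have hpos : 1 ≤ reqCount i ω := card_pos.mpr (by simpa [Finset.Nonempty] using h)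
    simp [reachInd, h, hpos]
  · have hzero : reqCount i ω = 0 := by simpa [reqCount] using h
    simp_all [reachInd]

lemma prod_comp_eq_prod_pow_nreq {M T : ℕ} {N : Type*} [CommMonoid N] (gidx : Fin T → Fin M)
    (c : Fin M → N) : ∏ t, c (gidx t) = ∏ j, c j ^ nreq gidx j := by
  rw [← prod_fiberwise' univ gidx c]
  exact prod_congr rfl fun j _ => by rw [prod_const]; rfl

instance isProbabilityMeasure_reqMeasure {M T k : ℕ} (hk : 0 < k) (Grp : Fin M → Finset ℕ)
    (hcard : ∀ j, (Grp j).card = k) (gidx : Fin T → Fin M) :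
    IsProbabilityMeasure (reqMeasure hk Grp hcard gidx) := by
  unfold reqMeasure; infer_instance

lemma reqMeasure_real_unreachedSet {M T k : ℕ} (hk : 0 < k) (Grp : Fin M → Finset ℕ)
    (hcard : ∀ j, (Grp j).card = k) (gidx : Fin T → Fin M) (A : Finset ℕ) :
    (reqMeasure hk Grp hcard gidx).real (unreachedSet T A)
      = ∏ j, (1 - #(Grp j ∩ A) / (k : ℝ)) ^ nreq gidx j := by
  rw [← prod_comp_eq_prod_pow_nreq gidx fun j => 1 - #(Grp j ∩ A) / (k : ℝ), measureReal_def,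
    reqMeasure, unreachedSet, Measure.pi_pi, ENNReal.toReal_prod]
  refine prod_congr rfl fun t _ => ?_
  rw [← measureReal_def, PMF.measureReal_uniformOfFinset_compl, hcard]

lemma prod_one_sub_card_inter_singleton {M T k : ℕ} (Grp : Fin M → Finset ℕ)
    (gidx : Fin T → Fin M) (i : ℕ) :
    ∏ j, (1 - #(Grp j ∩ {i}) / (k : ℝ)) ^ nreq gidx j
      = (1 - 1 / (k : ℝ)) ^ ∑ j ∈ Gset Grp i, nreq gidx j :=
  prod_pow_eq_pow_sum_of_eqOn _ (fun j hj => by simp_all [Gset])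
    (fun j hj => by simp_all [Gset])

lemma prod_one_sub_card_inter_pair {M T k : ℕ} (Grp : Fin M → Finset ℕ)
    (gidx : Fin T → Fin M) {i i' : ℕ} (hii' : i ≠ i') :
    ∏ j, (1 - #(Grp j ∩ {i, i'}) / (k : ℝ)) ^ nreq gidx j
      = (1 - 2 / (k : ℝ)) ^ (∑ j ∈ Gset Grp i ∩ Gset Grp i', nreq gidx j)
        * (1 - 1 / (k : ℝ))
          ^ ∑ j ∈ (Gset Grp i ∪ Gset Grp i') \ (Gset Grp i ∩ Gset Grp i'), nreq gidx j := by
  refine prod_pow_eq_pow_sum_mul_pow_sum _ inter_subset_union (fun j hj => ?_) (fun j hj => ?_)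
    (fun j hj => ?_) <;> simp only [Gset, mem_inter, mem_union, mem_sdiff, mem_filter,
      mem_univ, true_and] at hj <;> rw [card_inter_pair hii']
  · simp [hj.1, hj.2]
  · rcases hj with ⟨hi | hi', hnot⟩
    · have hi' : i' ∉ Grp j := fun hi' => hnot ⟨hi, hi'⟩
      simp [hi, hi']
    · have hi : i ∉ Grp j := fun hi => hnot ⟨hi, hi'⟩
      simp [hi, hi']
  · simp [not_or.mp hj]

/-- Covariance of unique-reach indicators: In the uniform group-request
model, for two distinct users `i ≠ i'`, with `G_∩ = G_i ∩ G_{i'}`, `G_∪ = G_i ∪ G_{i'}`,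
`Cov[R_i, R_{i'}] = ((1 − 2/k)^{∑_{j∈G_∩} n_j} − (1 − 1/k)^{2∑_{j∈G_∩} n_j})
  · (1 − 1/k)^{∑_{j ∈ G_∪ \ G_∩} n_j}`,
where the covariance is `E[R_i R_{i'}] − E[R_i]·E[R_{i'}]`. -/
theorem covariance_unique_reach {M T k : ℕ} (hk : 0 < k) (Grp : Fin M → Finset ℕ)
    (hcard : ∀ j, (Grp j).card = k) (gidx : Fin T → Fin M) (i i' : ℕ) (hii' : i ≠ i') :
    (∫ ω, reachInd i ω * reachInd i' ω ∂(reqMeasure hk Grp hcard gidx))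
        - (∫ ω, reachInd i ω ∂(reqMeasure hk Grp hcard gidx))
          * (∫ ω, reachInd i' ω ∂(reqMeasure hk Grp hcard gidx))
      = ((1 - 2 / (k : ℝ)) ^ (∑ j ∈ Gset Grp i ∩ Gset Grp i', nreq gidx j)
          - (1 - 1 / (k : ℝ)) ^ (2 * ∑ j ∈ Gset Grp i ∩ Gset Grp i', nreq gidx j))
        * (1 - 1 / (k : ℝ))
            ^ (∑ j ∈ (Gset Grp i ∪ Gset Grp i') \ (Gset Grp i ∩ Gset Grp i'),
                nreq gidx j) := by
  rw [reachInd_eq_indicator i, reachInd_eq_indicator i',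
    integral_indicator_compl_mul_sub_mul _ (measurableSet_unreachedSet T _)
      (measurableSet_unreachedSet T _),
    unreachedSet_inter]
  simp only [reqMeasure_real_unreachedSet, prod_one_sub_card_inter_singleton]
  rw [show ({i} ∪ {i'} : Finset ℕ) = {i, i'} from rfl, prod_one_sub_card_inter_pair _ _ hii',
    ← pow_add]
  have hsum : ∑ j ∈ Gset Grp i, nreq gidx j + ∑ j ∈ Gset Grp i', nreq gidx j
      = 2 * ∑ j ∈ Gset Grp i ∩ Gset Grp i', nreq gidx j
        + ∑ j ∈ (Gset Grp i ∪ Gset Grp i') \ (Gset Grp i ∩ Gset Grp i'), nreq gidx j := by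
    rw [← sum_union_inter, ← sum_sdiff (inter_subset_union (s := Gset Grp i))]
    ring
  rw [hsum, pow_add]
  ring
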